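/- arXiv:1907.07456 — 2 statements merged into one kernel-verified Lean document; each statement's English description precedes it below -/
import Mathlib

section
/- For a k-vector v in a finite-dimensional real vector space V, the span of v consists exactly of all vectors of the form v ⌟ α (interior product) where α ranges over the (k−1)-covectors on V. -/
open MeasureTheory
noncomputable section

/-- Multivectors (or multicovectors) on `ℝⁿ`, described by their coordinates with
respect to the canonical basis `e_s = e_{s₁} ∧ … ∧ e_{s_k}` (`s` a sorted subset of
indices): a `k`-vector is such a family of coordinates supported on sets of
cardinality `k`. -/
abbrev MV (n : ℕ) := Finset (Fin n) → ℝ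

namespace MV

variable {n : ℕ}

/-- `v` is a `k`-(co)vector: its coordinates are supported on index sets of size `k`. -/
def IsGrade (k : ℕ) (v : MV n) : Prop := ∀ s : Finset (Fin n), s.card ≠ k → v s = 0

/-- the sign of the permutation reordering the concatenation of the (sorted) index
sets `a` and `b`. -/
def sgn (a b : Finset (Fin n)) : ℝ :=
  (-1 : ℝ) ^ ((a ×ˢ b).filter (fun p => p.2 < p.1)).card

/-- exterior (wedge) product of multi(co)vectors. -/
def wedge (v w : MV n) : MV n :=
  fun s => ∑ a ∈ s.powerset, sgn a (s \ a) * v a * w (s \ a)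

/-- interior product `v ⌟ α` of a `k`-vector `v` and an `h`-covector `α` (`h ≤ k`):
the `(k-h)`-vector with `⟨v ⌟ α, β⟩ = ⟨v, α ∧ β⟩` for every `(k-h)`-covector `β`. -/
def lhook (v α : MV n) : MV n :=
  fun b => ∑ a ∈ bᶜ.powerset, sgn a b * α a * v (a ∪ b)

/-- interior product `v ⌞ α` of a `k`-vector `v` and an `h`-covector `α` (`k ≤ h`):
the `(h-k)`-covector with `⟨w, v ⌞ α⟩ = ⟨w ∧ v, α⟩` for every `(h-k)`-vector `w`. -/
def rhook (v α : MV n) : MV n :=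
  fun b => ∑ c ∈ bᶜ.powerset, sgn b c * v c * α (b ∪ c)

/-- duality pairing between multivectors and multicovectors. -/
def pair (v α : MV n) : ℝ := ∑ s : Finset (Fin n), v s * α s

/-- the top multi(co)vector `e₁ ∧ … ∧ eₙ` (resp. `dx₁ ∧ … ∧ dxₙ`). -/
def full : MV n := fun s => if s = Finset.univ then 1 else 0

/-- Hodge-type operator on `k`-vectors: `⋆v := v ⌞ dx`. -/
def hodgeV (v : MV n) : MV n := rhook v full

/-- Hodge-type operator on `k`-covectors: `⋆α := e ⌟ α`. -/
def hodgeC (α : MV n) : MV n := lhook full α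

/-- the `1`-vector (or `1`-covector) with coordinates `u : ℝⁿ`. -/
def vec1 (u : Fin n → ℝ) : MV n := fun s => ∑ j, if s = {j} then u j else 0

/-- the vector in `ℝⁿ` corresponding to a `1`-vector. -/
def toVec (m : MV n) : Fin n → ℝ := fun j => m {j}

/-- the unit `0`-vector. -/
def mvOne : MV n := fun s => if s = ∅ then 1 else 0

/-- the basis multicovector `dx_t` associated with the index set `t`. -/
def dxS (t : Finset (Fin n)) : MV n := fun s => if s = t then 1 else 0

/-- wedge product of a list of multivectors. -/
def wedgeList (l : List (MV n)) : MV n := l.foldr wedge mvOne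

/-- partial derivative `∂v/∂x_j` of a multivectorfield. -/
def pd (v : (Fin n → ℝ) → MV n) (j : Fin n) (x : Fin n → ℝ) : MV n :=
  fderiv ℝ v x (Pi.single j 1)

/-- divergence of a `k`-vectorfield: `div v := Σ_j (∂v/∂x_j) ⌟ dx_j`, a
`(k-1)`-vectorfield. -/
def dvg (v : (Fin n → ℝ) → MV n) (x : Fin n → ℝ) : MV n :=
  ∑ j : Fin n, lhook (pd v j x) (dxS {j})

/-- exterior derivative of an `h`-form: `dω := Σ_j dx_j ∧ ∂ω/∂x_j`. -/
def extd (ω : (Fin n → ℝ) → MV n) (x : Fin n → ℝ) : MV n :=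
  ∑ j : Fin n, wedge (dxS {j}) (pd ω j x)

/-- Lie bracket of two vectorfields. -/
def lie (v w : (Fin n → ℝ) → (Fin n → ℝ)) (x : Fin n → ℝ) : Fin n → ℝ :=
  fderiv ℝ v x (w x) - fderiv ℝ w x (v x)

/-- the simple `k`-vector `w₁ ∧ … ∧ w_k`, in coordinates. -/
def simpleCoeff (k : ℕ) (w : Fin k → (Fin n → ℝ)) : MV n :=
  fun s => if h : s.card = k then
    Matrix.det (Matrix.of fun i j : Fin k => w j ((s.orderIsoOfFin h) i : Fin n))
  else 0

/-- `Λ_k(W)`: the space of `k`-vectors of the subspace `W ⊆ ℝⁿ`, viewed inside the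
space of `k`-vectors of `ℝⁿ`; it is spanned by the simple `k`-vectors of elements
of `W`. -/
def lambdaK (k : ℕ) (W : Submodule ℝ (Fin n → ℝ)) : Submodule ℝ (MV n) :=
  Submodule.span ℝ
    {m : MV n | ∃ w : Fin k → (Fin n → ℝ), (∀ i, w i ∈ W) ∧ m = simpleCoeff k w}

/-- the span of a `k`-vector `v`: the smallest subspace `W` of `ℝⁿ` with
`v ∈ Λ_k(W)`. -/
def spanCoord (k : ℕ) (v : MV n) : Submodule ℝ (Fin n → ℝ) :=
  sInf {W : Submodule ℝ (Fin n → ℝ) | v ∈ lambdaK k W}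

/-- pushforward of a multivector under a linear map `A`. -/
def pushMV (A : (Fin n → ℝ) → (Fin n → ℝ)) (v : MV n) : MV n :=
  fun t => ∑ s : Finset (Fin n),
    if h : s.card = t.card then
      v s * Matrix.det (Matrix.of fun i j : Fin t.card =>
        A (Pi.single ((s.orderIsoOfFin h) j : Fin n) 1) ((t.orderIsoOfFin rfl) i : Fin n))
    else 0

end MV

open MV

/-!
Both inclusions rest on the expansion
`(w₀ ∧ ⋯ ∧ w_K) ⌟ α = ∑ᵢ (-1)^(K+i) ⟨w₀ ∧ ⋯ ŵᵢ ⋯ ∧ w_K, α⟩ • wᵢ`,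
a Laplace expansion of the determinants giving the coordinates of a simple `(K+1)`-vector.
It shows that `v ⌟ α` lies in every `W` with `v ∈ Λ_k(W)`, hence in `span v`.
Conversely, let `S` be the space of all `v ⌟ α` and let `b` be a basis of `ℝⁿ` extending a basis
`(b_r)_{r ∈ I}` of `S`. Expand `v = ∑_σ c_σ b_σ` in the wedges of `b`. If `p ∈ σ \ I`, then the
`p`-th coordinate (in `b`) of `v ⌟ β_{σ \ p}`, where `β` is the dual basis, is `±c_σ` by the
expansion above and Cauchy–Binet; it vanishes because `v ⌟ β_{σ \ p} ∈ S`. Hence `v ∈ Λ_k(S)`,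
that is, `span v ⊆ S`.
-/

namespace Finset

variable {α : Type*} [LinearOrder α]

theorem orderEmbOfFin_succAbove_eq_erase {K : ℕ} {s : Finset α} (hs : s.card = K + 1)
    {p : Fin (K + 1)} (ht : (s.erase (s.orderEmbOfFin hs p)).card = K) (i : Fin K) :
    s.orderEmbOfFin hs (p.succAbove i) = (s.erase (s.orderEmbOfFin hs p)).orderEmbOfFin ht i := by
  have hmem : ∀ x, s.orderEmbOfFin hs (p.succAbove x) ∈ s.erase (s.orderEmbOfFin hs p) :=
    fun x => mem_erase.2
      ⟨fun h => p.succAbove_ne x ((s.orderEmbOfFin hs).injective h), orderEmbOfFin_mem _ _ _⟩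
  exact congrFun (orderEmbOfFin_unique ht hmem
    ((s.orderEmbOfFin hs).strictMono.comp (Fin.strictMono_succAbove p))) i

theorem val_eq_card_filter_lt_orderEmbOfFin {K : ℕ} {s : Finset α} (hs : s.card = K)
    (p : Fin K) : (p : ℕ) = (s.filter (· < s.orderEmbOfFin hs p)).card := by
  have himg : s.filter (· < s.orderEmbOfFin hs p) =
      (Iio p).map (s.orderEmbOfFin hs).toEmbedding := by
    ext x
    simp only [mem_filter, mem_map, mem_Iio, RelEmbedding.coe_toEmbedding]
    constructor
    · rintro ⟨hxs, hxp⟩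
      obtain ⟨i, rfl⟩ : x ∈ Set.range (s.orderEmbOfFin hs) := by
        rwa [range_orderEmbOfFin]
      exact ⟨i, (s.orderEmbOfFin hs).lt_iff_lt.1 hxp, rfl⟩
    · rintro ⟨i, hip, rfl⟩
      exact ⟨orderEmbOfFin_mem _ _ _, (s.orderEmbOfFin hs).strictMono hip⟩
  rw [himg, card_map, Fin.card_Iio]

theorem card_filter_lt_add_card_filter_gt {a : Finset α} {j : α} (hj : j ∉ a) :
    (a.filter (· < j)).card + (a.filter (j < ·)).card = a.card := by
  rw [← card_filter_add_card_filter_not (s := a) (p := (· < j))]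
  congr 2
  ext x
  simp only [mem_filter, not_lt, and_congr_right_iff]
  exact fun hx => ⟨fun h => h.le, fun h => h.lt_of_ne (by rintro rfl; exact hj hx)⟩

theorem exists_perm_comp_eq_orderEmbOfFin {k : ℕ} {φ : Fin k → α}
    (hφ : Function.Injective φ) :
    ∃ (π : Equiv.Perm (Fin k)) (h : (univ.image φ).card = k),
      φ ∘ π = (univ.image φ).orderEmbOfFin h :=
  ⟨Tuple.sort φ, by rw [card_image_of_injective _ hφ, card_univ, Fintype.card_fin],
    orderEmbOfFin_unique _ (fun _ => mem_image_of_mem _ (mem_univ _))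
      ((Tuple.monotone_sort φ).strictMono_of_injective (hφ.comp (Tuple.sort φ).injective))⟩

theorem det_ite_orderEmbOfFin_eq (R : Type*) [CommRing R] {K : ℕ} {s t : Finset α}
    (hs : s.card = K) (ht : t.card = K) :
    (Matrix.of fun i j => if s.orderEmbOfFin hs i = t.orderEmbOfFin ht j then (1 : R) else 0).det =
      if s = t then 1 else 0 := by
  split_ifs with hst
  · subst hst
    rw [show Matrix.of _ = (1 : Matrix (Fin K) (Fin K) R) by
      ext i j; simp [Matrix.one_apply]]
    exact Matrix.det_one
  · obtain ⟨x, hxs, hxt⟩ := not_subset.1 fun h => hst (eq_of_subset_of_card_le h (by omega))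
    obtain ⟨i, rfl⟩ : x ∈ Set.range (s.orderEmbOfFin hs) := by rwa [range_orderEmbOfFin]
    exact Matrix.det_eq_zero_of_row_eq_zero i fun j =>
      if_neg fun h : s.orderEmbOfFin hs i = t.orderEmbOfFin ht j =>
        hxt (by rw [h]; exact orderEmbOfFin_mem _ _ _)

end Finset

theorem Submodule.exists_basis_span_image_eq {K V ι : Type*} [DivisionRing K] [AddCommGroup V]
    [Module K V] (b₀ : Module.Basis ι K V) (W : Submodule K V) :
    ∃ (b : Module.Basis ι K V) (I : Set ι), Submodule.span K (b '' I) = W := by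
  obtain ⟨s, -, hspan, hli⟩ := exists_linearIndependent K (W : Set V)
  replace hli : LinearIndepOn K id s := hli
  let B := Module.Basis.extend hli
  refine ⟨B.reindex (B.indexEquiv b₀), B.indexEquiv b₀ '' (Subtype.val ⁻¹' s), ?_⟩
  rw [Set.image_image]
  simp only [Module.Basis.reindex_apply, Equiv.symm_apply_apply, B, Module.Basis.coe_extend]
  rw [Set.image_preimage_eq_of_subset (by rw [Subtype.range_coe]; exact hli.subset_extend _),
    hspan, Submodule.span_eq]

namespace MV

open Finset

variable {n : ℕ}

theorem simpleCoeff_of_card_ne {k : ℕ} (w : Fin k → Fin n → ℝ) {s : Finset (Fin n)}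
    (h : s.card ≠ k) : simpleCoeff k w s = 0 := by
  rw [simpleCoeff, dif_neg h]

theorem simpleCoeff_apply_of_card_eq {k : ℕ} (w : Fin k → Fin n → ℝ) {s : Finset (Fin n)}
    (h : s.card = k) :
    simpleCoeff k w s = (Matrix.of fun i j => w i (s.orderEmbOfFin h j)).det := by
  rw [simpleCoeff, dif_pos h, ← Matrix.det_transpose]
  rfl

def simpleCoeffₐ (k : ℕ) : (Fin n → ℝ) [⋀^Fin k]→ₗ[ℝ] MV n :=
  AlternatingMap.pi fun s => if h : s.card = k then
    Matrix.detRowAlternating.compLinearMap (LinearMap.funLeft ℝ ℝ (s.orderEmbOfFin h)) else 0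

theorem simpleCoeffₐ_apply (k : ℕ) (w : Fin k → Fin n → ℝ) :
    simpleCoeffₐ k w = simpleCoeff k w := by
  funext s
  by_cases h : s.card = k
  · rw [simpleCoeff_apply_of_card_eq w h]
    simp only [simpleCoeffₐ, AlternatingMap.pi_apply, h, dite_true]
    rfl
  · simp [simpleCoeffₐ, simpleCoeff, h]

def hookVec : MV n →ₗ[ℝ] MV n →ₗ[ℝ] (Fin n → ℝ) :=
  LinearMap.mk₂ ℝ (fun v α => toVec (lhook v α))
    (fun _ _ _ => funext fun _ => by
      simp only [toVec, lhook, Pi.add_apply, ← sum_add_distrib, mul_add])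
    (fun _ _ _ => funext fun _ => by
      simp only [toVec, lhook, Pi.smul_apply, smul_eq_mul, mul_sum]
      exact sum_congr rfl fun _ _ => by ring)
    (fun _ _ _ => funext fun _ => by
      simp only [toVec, lhook, Pi.add_apply, ← sum_add_distrib]
      exact sum_congr rfl fun _ _ => by ring)
    (fun _ _ _ => funext fun _ => by
      simp only [toVec, lhook, Pi.smul_apply, smul_eq_mul, mul_sum]
      exact sum_congr rfl fun _ _ => by ring)

theorem hookVec_apply (v α : MV n) : hookVec v α = toVec (lhook v α) := rfl

theorem toVec_lhook (m α : MV n) (j : Fin n) :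
    toVec (lhook m α) j =
      ∑ a : Finset (Fin n), if j ∈ a then 0 else α a * sgn a {j} * m (insert j a) := by
  rw [toVec, lhook, show ({j}ᶜ : Finset (Fin n)).powerset = univ.filter (j ∉ ·) by ext; simp,
    sum_filter]
  refine sum_congr rfl fun a _ => ?_
  split_ifs
  · rfl
  · rw [union_comm, ← insert_eq]
    ring

theorem sgn_singleton (a : Finset (Fin n)) (j : Fin n) :
    sgn a {j} = (-1 : ℝ) ^ (a.filter (j < ·)).card := by
  rw [sgn, show (a ×ˢ {j}).filter (fun p => p.2 < p.1) = (a.filter (j < ·)) ×ˢ {j} by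
    ext ⟨x, y⟩; simp only [mem_filter, mem_product, mem_singleton]; grind,
    card_product, card_singleton, mul_one]

theorem det_eq_sum_simpleCoeff_succAbove {K : ℕ} {a : Finset (Fin n)} (ha : a.card = K)
    (w : Fin (K + 1) → Fin n → ℝ) (col : Fin (K + 1) → Fin n) (p : Fin (K + 1))
    (hcol : ∀ c, col (p.succAbove c) = a.orderEmbOfFin ha c) :
    (Matrix.of fun i c => w i (col c)).det =
      ∑ i : Fin (K + 1),
        (-1 : ℝ) ^ ((i : ℕ) + p) * w i (col p) * simpleCoeff K (w ∘ i.succAbove) a := by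
  rw [Matrix.det_succ_column _ p]
  refine sum_congr rfl fun i _ => ?_
  rw [simpleCoeff_apply_of_card_eq _ ha]
  congr 2
  ext r c
  simp [hcol]

theorem sum_simpleCoeff_succAbove_of_mem {K : ℕ} {a : Finset (Fin n)} (ha : a.card = K)
    (w : Fin (K + 1) → Fin n → ℝ) {j : Fin n} (hj : j ∈ a) :
    ∑ i : Fin (K + 1),
      (-1 : ℝ) ^ (K + (i : ℕ)) * simpleCoeff K (w ∘ i.succAbove) a * w i j = 0 := by
  obtain ⟨q, rfl⟩ : ∃ q, a.orderEmbOfFin ha q = j := by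
    rwa [← Set.mem_range, range_orderEmbOfFin]
  -- Appending the column `j ∈ a` to the columns of `a` gives a matrix with two equal columns.
  have hdet := det_eq_sum_simpleCoeff_succAbove ha w
    (Fin.snoc (a.orderEmbOfFin ha) (a.orderEmbOfFin ha q)) (Fin.last K)
    (fun c => by rw [Fin.succAbove_last, Fin.snoc_castSucc])
  rw [Matrix.det_zero_of_column_eq (Fin.castSucc_lt_last q).ne (fun r => by simp)] at hdet
  rw [hdet]
  exact sum_congr rfl fun i _ => by simp only [Fin.snoc_last, Fin.val_last]; ring

theorem sgn_mul_simpleCoeff_insert {K : ℕ} {a : Finset (Fin n)} (ha : a.card = K)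
    (w : Fin (K + 1) → Fin n → ℝ) {j : Fin n} (hj : j ∉ a) :
    sgn a {j} * simpleCoeff (K + 1) w (insert j a) =
      ∑ i : Fin (K + 1),
        (-1 : ℝ) ^ (K + (i : ℕ)) * simpleCoeff K (w ∘ i.succAbove) a * w i j := by
  have hs : (insert j a).card = K + 1 := by rw [card_insert_of_notMem hj, ha]
  obtain ⟨p, hp⟩ : ∃ p, (insert j a).orderEmbOfFin hs p = j := by
    rw [← Set.mem_range, range_orderEmbOfFin]; exact mem_insert_self j a
  have ha' : ((insert j a).erase ((insert j a).orderEmbOfFin hs p)).card = K := by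
    rw [hp, erase_insert hj, ha]
  -- `j` sits at position `p = #{x ∈ a | x < j}` of `insert j a`, so `sgn a {j} = (-1) ^ (K - p)`.
  have hpos := val_eq_card_filter_lt_orderEmbOfFin hs p
  rw [hp, filter_insert, if_neg (lt_irrefl j)] at hpos
  have hcount := card_filter_lt_add_card_filter_gt hj
  rw [simpleCoeff_apply_of_card_eq _ hs, det_eq_sum_simpleCoeff_succAbove ha w _ p
    (fun c => by rw [orderEmbOfFin_succAbove_eq_erase hs ha']; simp_rw [hp, erase_insert hj]),
    sgn_singleton, mul_sum]
  refine sum_congr rfl fun i _ => ?_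
  rw [hp, show (-1 : ℝ) ^ (K + (i : ℕ)) =
      (-1) ^ (a.filter (j < ·)).card * (-1) ^ ((i : ℕ) + p) by
    rw [← pow_add]; congr 1; omega]
  ring

theorem toVec_lhook_simpleCoeff {K : ℕ} (w : Fin (K + 1) → Fin n → ℝ) {α : MV n}
    (hα : IsGrade K α) :
    toVec (lhook (simpleCoeff (K + 1) w) α) =
      ∑ i : Fin (K + 1),
        ((-1 : ℝ) ^ (K + (i : ℕ)) * pair (simpleCoeff K (w ∘ i.succAbove)) α) • w i := by
  funext j
  have hterm : ∀ a : Finset (Fin n),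
      (if j ∈ a then 0 else α a * sgn a {j} * simpleCoeff (K + 1) w (insert j a)) =
        α a * ∑ i : Fin (K + 1),
          (-1 : ℝ) ^ (K + (i : ℕ)) * simpleCoeff K (w ∘ i.succAbove) a * w i j := by
    intro a
    by_cases ha : a.card = K
    · split_ifs with hj
      · rw [sum_simpleCoeff_succAbove_of_mem ha w hj, mul_zero]
      · rw [mul_assoc, sgn_mul_simpleCoeff_insert ha w hj]
    · simp [hα a ha]
  rw [toVec_lhook, sum_congr rfl fun a _ => hterm a, Finset.sum_apply]
  simp only [Pi.smul_apply, smul_eq_mul, pair, mul_sum, sum_mul]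
  rw [sum_comm]
  exact sum_congr rfl fun _ _ => sum_congr rfl fun _ _ => by ring

theorem toVec_lhook_mem_of_mem_lambdaK {K : ℕ} {W : Submodule ℝ (Fin n → ℝ)} {m : MV n}
    (hm : m ∈ lambdaK (K + 1) W) {α : MV n} (hα : IsGrade K α) : toVec (lhook m α) ∈ W := by
  refine (Submodule.span_le (p := W.comap (hookVec.flip α))).2 ?_ hm
  rintro _ ⟨w, hw, rfl⟩
  rw [SetLike.mem_coe, Submodule.mem_comap, LinearMap.flip_apply, hookVec_apply,
    toVec_lhook_simpleCoeff w hα]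
  exact Submodule.sum_mem _ fun i _ => Submodule.smul_mem _ _ (hw i)

def gradeSubmodule (k : ℕ) : Submodule ℝ (MV n) where
  carrier := {α | IsGrade k α}
  zero_mem' _ _ := rfl
  add_mem' hα hβ s hs := by simp [hα s hs, hβ s hs]
  smul_mem' c _ hα s hs := by simp [hα s hs]

def hookSpan (K : ℕ) (v : MV n) : Submodule ℝ (Fin n → ℝ) :=
  (gradeSubmodule K).map (hookVec v)

theorem mem_hookSpan {K : ℕ} {v : MV n} {u : Fin n → ℝ} :
    u ∈ hookSpan K v ↔ ∃ α, IsGrade K α ∧ toVec (lhook v α) = u :=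
  Iff.rfl

theorem hookSpan_le_spanCoord {K : ℕ} (v : MV n) : hookSpan K v ≤ spanCoord (K + 1) v := by
  rintro _ ⟨α, hα, rfl⟩
  exact Submodule.mem_sInf.2 fun W hW => toVec_lhook_mem_of_mem_lambdaK hW hα

theorem dxS_eq_simpleCoeff {k : ℕ} {s : Finset (Fin n)} (hs : s.card = k) :
    dxS s = simpleCoeff k fun i => Pi.single (s.orderEmbOfFin hs i) 1 := by
  funext t
  by_cases ht : t.card = k
  · rw [simpleCoeff_apply_of_card_eq _ ht, dxS, ← Matrix.det_transpose,
      ← det_ite_orderEmbOfFin_eq ℝ ht hs]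
    congr 1
    ext i j
    simp [Pi.single_apply]
  · rw [simpleCoeff_of_card_ne _ ht, dxS, if_neg (by rintro rfl; exact ht hs)]

theorem pair_dxS (s : Finset (Fin n)) (α : MV n) : pair (dxS s) α = α s := by
  simp [pair, dxS]

theorem pair_simpleCoeff {K : ℕ} (u z : Fin K → Fin n → ℝ) :
    pair (simpleCoeff K u) (simpleCoeff K z) = (Matrix.of fun i j => ∑ l, u i l * z j l).det := by
  suffices key : ((dotProductBilin ℝ ℝ).flip (simpleCoeff K z)).compAlternatingMap
      (simpleCoeffₐ K) = Matrix.detRowAlternating.compLinearMap (Matrix.of z).mulVecLin by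
    have := congrArg (fun f => f u) key
    simp only [LinearMap.compAlternatingMap_apply, AlternatingMap.compLinearMap_apply,
      simpleCoeffₐ_apply] at this
    refine this.trans (congrArg Matrix.det ?_)
    ext i j
    simp [Matrix.mulVec, dotProduct, mul_comm]
  refine (Pi.basisFun ℝ (Fin n)).ext_alternating fun φ hφ => ?_
  obtain ⟨π, hs, hπ⟩ := exists_perm_comp_eq_orderEmbOfFin hφ
  have hφ' : (fun i => Pi.basisFun ℝ (Fin n) (φ i)) =
      (fun i => Pi.single ((univ.image φ).orderEmbOfFin hs i) 1) ∘ π.symm := by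
    funext i
    simp [← hπ]
  rw [hφ', AlternatingMap.map_perm, AlternatingMap.map_perm]
  congr 1
  simp only [LinearMap.compAlternatingMap_apply, AlternatingMap.compLinearMap_apply,
    simpleCoeffₐ_apply, ← dxS_eq_simpleCoeff]
  change pair (dxS _) (simpleCoeff K z) = Matrix.det _
  rw [pair_dxS, simpleCoeff_apply_of_card_eq _ hs, ← Matrix.det_transpose]
  congr 1
  ext i j
  simp

def familyWedge (k : ℕ) (f : Fin n → Fin n → ℝ) (σ : Finset (Fin n)) : MV n :=
  if h : σ.card = k then simpleCoeff k (f ∘ σ.orderEmbOfFin h) else 0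

theorem familyWedge_of_card_eq {k : ℕ} (f : Fin n → Fin n → ℝ) {σ : Finset (Fin n)}
    (h : σ.card = k) : familyWedge k f σ = simpleCoeff k (f ∘ σ.orderEmbOfFin h) :=
  dif_pos h

theorem familyWedge_of_card_ne {k : ℕ} (f : Fin n → Fin n → ℝ) {σ : Finset (Fin n)}
    (h : σ.card ≠ k) : familyWedge k f σ = 0 :=
  dif_neg h

theorem isGrade_familyWedge (k : ℕ) (f : Fin n → Fin n → ℝ) (σ : Finset (Fin n)) :
    IsGrade k (familyWedge k f σ) := fun s hs => by
  by_cases h : σ.card = k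
  · rw [familyWedge_of_card_eq f h, simpleCoeff_of_card_ne _ hs]
  · rw [familyWedge_of_card_ne f h, Pi.zero_apply]

theorem simpleCoeff_mem_span_familyWedge (b : Module.Basis (Fin n) ℝ (Fin n → ℝ)) {k : ℕ}
    (w : Fin k → Fin n → ℝ) :
    simpleCoeff k w ∈ Submodule.span ℝ (Set.range (familyWedge k b)) := by
  have hw : w = fun i => ∑ r, b.repr (w i) r • b r := funext fun i => (b.sum_repr (w i)).symm
  rw [hw, ← simpleCoeffₐ_apply, ← AlternatingMap.coe_multilinearMap, MultilinearMap.map_sum]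
  refine Submodule.sum_mem _ fun φ _ => ?_
  rw [AlternatingMap.coe_multilinearMap, AlternatingMap.map_smul_univ (simpleCoeffₐ k)
    (fun i => b.repr (w i) (φ i)) (fun i => b (φ i))]
  refine Submodule.smul_mem _ _ ?_
  by_cases hφ : Function.Injective φ
  · obtain ⟨π, hs, hπ⟩ := exists_perm_comp_eq_orderEmbOfFin hφ
    have hφ' : (fun i => b (φ i)) = (b ∘ (univ.image φ).orderEmbOfFin hs) ∘ π.symm := by
      funext i
      simp [← hπ]
    rw [hφ', AlternatingMap.map_perm, simpleCoeffₐ_apply, ← familyWedge_of_card_eq b hs]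
    exact zsmul_mem (Submodule.subset_span (Set.mem_range_self _)) _
  · rw [AlternatingMap.map_eq_zero_of_not_injective _ (fun i => b (φ i))
      fun h => hφ (Function.Injective.of_comp (f := b) h)]
    exact Submodule.zero_mem _

theorem mem_span_familyWedge (b : Module.Basis (Fin n) ℝ (Fin n → ℝ)) {k : ℕ} {v : MV n}
    (hv : IsGrade k v) : v ∈ Submodule.span ℝ (Set.range (familyWedge k b)) := by
  rw [show v = ∑ s, v s • dxS s by funext t; simp [dxS]]
  refine Submodule.sum_mem _ fun s _ => ?_
  by_cases hs : s.card = k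
  · rw [dxS_eq_simpleCoeff hs]
    exact Submodule.smul_mem _ _ (simpleCoeff_mem_span_familyWedge b _)
  · rw [hv s hs, zero_smul]
    exact Submodule.zero_mem _

def coordVec (b : Module.Basis (Fin n) ℝ (Fin n → ℝ)) (r : Fin n) : Fin n → ℝ :=
  fun l => b.repr (Pi.single l 1) r

theorem sum_mul_coordVec (b : Module.Basis (Fin n) ℝ (Fin n → ℝ)) (y : Fin n → ℝ)
    (r : Fin n) :
    ∑ l, y l * coordVec b r l = b.repr y r := by
  conv_rhs => rw [← univ_sum_single y]
  simp only [coordVec, map_sum, Finsupp.finsetSum_apply]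
  refine sum_congr rfl fun l _ => ?_
  rw [show (Pi.single l (y l) : Fin n → ℝ) = y l • Pi.single l 1 by
    rw [← Pi.single_smul', smul_eq_mul, mul_one], map_smul]
  rfl

theorem pair_familyWedge_coordVec (b : Module.Basis (Fin n) ℝ (Fin n → ℝ)) {K : ℕ}
    {ρ τ : Finset (Fin n)} (hρ : ρ.card = K) (hτ : τ.card = K) :
    pair (familyWedge K b ρ) (familyWedge K (coordVec b) τ) = if ρ = τ then 1 else 0 := by
  rw [familyWedge_of_card_eq _ hρ, familyWedge_of_card_eq _ hτ, pair_simpleCoeff,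
    ← det_ite_orderEmbOfFin_eq ℝ hρ hτ]
  congr 1
  ext i j
  simp [sum_mul_coordVec, Finsupp.single_apply]

theorem repr_toVec_lhook_familyWedge (b : Module.Basis (Fin n) ℝ (Fin n → ℝ)) {K : ℕ}
    (σ : Finset (Fin n)) {τ : Finset (Fin n)} (hτ : τ.card = K) {p : Fin n} (hp : p ∉ τ) :
    b.repr (toVec (lhook (familyWedge (K + 1) b σ) (familyWedge K (coordVec b) τ))) p =
      if σ = insert p τ then (-1) ^ (K + (σ.filter (· < p)).card) else 0 := by
  by_cases hσ : σ.card = K + 1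
  swap
  · rw [familyWedge_of_card_ne _ hσ,
      if_neg (by rintro rfl; rw [card_insert_of_notMem hp] at hσ; omega)]
    simp [← hookVec_apply]
  rw [familyWedge_of_card_eq _ hσ, toVec_lhook_simpleCoeff _ (isGrade_familyWedge _ _ _)]
  simp only [map_sum, map_smul, Finsupp.finsetSum_apply, Finsupp.smul_apply, Function.comp_apply,
    b.repr_self, Finsupp.single_apply, smul_eq_mul, mul_ite, mul_one, mul_zero]
  by_cases hpσ : p ∈ σ
  · have herase_eq : σ.erase p = τ ↔ σ = insert p τ :=
      ⟨fun h => by rw [← h, insert_erase hpσ], fun h => by rw [h, erase_insert hp]⟩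
    obtain ⟨i₀, rfl⟩ : ∃ i₀, σ.orderEmbOfFin hσ i₀ = p := by
      rwa [← Set.mem_range, range_orderEmbOfFin]
    have herase : (σ.erase (σ.orderEmbOfFin hσ i₀)).card = K := by
      rw [card_erase_of_mem hpσ, hσ, Nat.add_sub_cancel]
    simp only [(σ.orderEmbOfFin hσ).injective.eq_iff, sum_ite_eq', mem_univ, if_true]
    rw [show (b ∘ σ.orderEmbOfFin hσ) ∘ i₀.succAbove =
        b ∘ (σ.erase (σ.orderEmbOfFin hσ i₀)).orderEmbOfFin herase from
      funext fun i => congrArg b (orderEmbOfFin_succAbove_eq_erase hσ herase i),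
      ← familyWedge_of_card_eq _ herase, pair_familyWedge_coordVec b herase hτ,
      ← val_eq_card_filter_lt_orderEmbOfFin]
    by_cases h : σ = insert (σ.orderEmbOfFin hσ i₀) τ
    · rw [if_pos (herase_eq.2 h), if_pos h, mul_one]
    · rw [if_neg (mt herase_eq.1 h), if_neg h, mul_zero]
  · rw [if_neg fun h => hpσ (by rw [h]; exact mem_insert_self p τ)]
    exact sum_eq_zero fun i _ =>
      if_neg fun h : σ.orderEmbOfFin hσ i = p => hpσ (h ▸ orderEmbOfFin_mem _ _ _)

theorem coeff_eq_zero_of_repr_toVec_lhook_eq_zero (b : Module.Basis (Fin n) ℝ (Fin n → ℝ))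
    {K : ℕ} {v : MV n} {c : Finset (Fin n) → ℝ}
    (hc : ∑ σ, c σ • familyWedge (K + 1) b σ = v)
    {p : Fin n} (hvp : ∀ α, IsGrade K α → b.repr (toVec (lhook v α)) p = 0)
    {σ : Finset (Fin n)} (hσ : σ.card = K + 1) (hpσ : p ∈ σ) : c σ = 0 := by
  have hτ : (σ.erase p).card = K := by rw [card_erase_of_mem hpσ, hσ, Nat.add_sub_cancel]
  have h0 := hvp _ (isGrade_familyWedge K (coordVec b) (σ.erase p))
  rw [← hc, ← hookVec_apply, ← LinearMap.flip_apply, map_sum] at h0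
  simp only [map_smul, LinearMap.flip_apply, hookVec_apply, map_sum, Finsupp.finsetSum_apply,
    Finsupp.smul_apply, smul_eq_mul,
    repr_toVec_lhook_familyWedge b _ hτ (notMem_erase p σ), insert_erase hpσ, mul_ite, mul_zero,
    sum_ite_eq', mem_univ, if_true] at h0
  exact (mul_eq_zero.1 h0).resolve_right (pow_ne_zero _ (by norm_num))

theorem mem_lambdaK_hookSpan {K : ℕ} {v : MV n} (hv : IsGrade (K + 1) v) :
    v ∈ lambdaK (K + 1) (hookSpan K v) := by
  obtain ⟨b, I, hbI⟩ := (hookSpan K v).exists_basis_span_image_eq (Pi.basisFun ℝ (Fin n))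
  obtain ⟨c, hc⟩ := (Submodule.mem_span_range_iff_exists_fun ℝ).1 (mem_span_familyWedge b hv)
  have hvp : ∀ p ∉ I, ∀ α, IsGrade K α → b.repr (toVec (lhook v α)) p = 0 := by
    intro p hp α hα
    have hmem : toVec (lhook v α) ∈ Submodule.span ℝ (b '' I) := hbI ▸ ⟨α, hα, rfl⟩
    exact Finsupp.notMem_support_iff.1 fun h => hp (b.mem_span_image.1 hmem h)
  rw [← hbI, ← hc]
  refine Submodule.sum_mem _ fun σ _ => ?_
  by_cases hσ : σ.card = K + 1
  · by_cases hσI : (σ : Set (Fin n)) ⊆ I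
    · refine Submodule.smul_mem _ _
        (Submodule.subset_span ⟨_, fun i => ?_, familyWedge_of_card_eq b hσ⟩)
      exact Submodule.subset_span (Set.mem_image_of_mem b (hσI (orderEmbOfFin_mem _ _ _)))
    · obtain ⟨p, hpσ, hpI⟩ := Set.not_subset.1 hσI
      rw [coeff_eq_zero_of_repr_toVec_lhook_eq_zero b hc (hvp p hpI) hσ hpσ, zero_smul]
      exact Submodule.zero_mem _
  · rw [familyWedge_of_card_ne b hσ, smul_zero]
    exact Submodule.zero_mem _

end MV

theorem stmt2 {n k : ℕ} (hk : 1 ≤ k) (v : MV n) (hv : IsGrade k v) :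
    (MV.spanCoord k v : Set (Fin n → ℝ)) =
      {u : Fin n → ℝ | ∃ α : MV n, IsGrade (k - 1) α ∧ u = toVec (lhook v α)} := by
  obtain ⟨K, rfl⟩ : ∃ K, k = K + 1 := ⟨k - 1, by omega⟩
  have hspan : spanCoord (K + 1) v = hookSpan K v :=
    le_antisymm (sInf_le (mem_lambdaK_hookSpan hv)) (hookSpan_le_spanCoord v)
  ext u
  rw [SetLike.mem_coe, hspan, mem_hookSpan, Nat.add_sub_cancel]
  exact exists_congr fun α => and_congr_right fun _ => eq_comm
end
end

section
/- Let v be a C¹ k-vectorfield and ω a C¹ h-form on an open set Ω ⊂ ℝⁿ with h ≤ k. Then div(v ⌟ ω) = (−1)^h ((div v) ⌟ ω + v ⌟ dω), where div v := Σ_j (∂v/∂x_j) ⌟ dx_j. -/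
open MeasureTheory
noncomputable section

/-! The Leibniz rule splits `∂ⱼ(v ⌟ ω)` into `∂ⱼv ⌟ ω + v ⌟ ∂ⱼω`. Interior products compose as
`(v ⌟ α) ⌟ β = v ⌟ (α ∧ β)`, and `α ∧ dxⱼ = (-1)^h dxⱼ ∧ α` for an `h`-covector `α`, so
`(∂ⱼv ⌟ ω) ⌟ dxⱼ = (-1)^h (∂ⱼv ⌟ dxⱼ) ⌟ ω` and `(v ⌟ ∂ⱼω) ⌟ dxⱼ = (-1)^h v ⌟ (dxⱼ ∧ ∂ⱼω)`.
Summing over `j` gives `(-1)^h (div v ⌟ ω)` and `(-1)^h (v ⌟ dω)`. -/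

namespace MV

variable {n : ℕ}

open Finset

lemma sgn_mul_self (a b : Finset (Fin n)) : sgn a b * sgn a b = 1 := by
  rw [sgn, ← mul_pow, neg_mul_neg, one_mul, one_pow]

lemma sgn_union_left {a b : Finset (Fin n)} (c : Finset (Fin n)) (hab : Disjoint a b) :
    sgn (a ∪ b) c = sgn a c * sgn b c := by
  rw [sgn, sgn, sgn, ← pow_add, union_product, filter_union, card_union_of_disjoint]
  exact disjoint_filter_filter (disjoint_product.mpr (Or.inl hab))

lemma sgn_union_right {b c : Finset (Fin n)} (a : Finset (Fin n)) (hbc : Disjoint b c) :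
    sgn a (b ∪ c) = sgn a b * sgn a c := by
  rw [sgn, sgn, sgn, ← pow_add, product_union, filter_union, card_union_of_disjoint]
  exact disjoint_filter_filter (disjoint_product.mpr (Or.inr hbc))

lemma sgn_mul_sgn_swap {a b : Finset (Fin n)} (hab : Disjoint a b) :
    sgn a b * sgn b a = (-1 : ℝ) ^ (#a * #b) := by
  rw [sgn, sgn, ← pow_add, ← card_product]
  congr 1
  have hswap : #((b ×ˢ a).filter fun p => p.2 < p.1) = #((a ×ˢ b).filter fun p => p.1 < p.2) :=
    card_nbij' Prod.swap Prod.swap (fun p hp => by simpa [and_comm] using hp)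
      (fun p hp => by simpa [and_comm] using hp) (fun _ _ => rfl) (fun _ _ => rfl)
  rw [hswap, ← card_union_of_disjoint (disjoint_filter.mpr fun p _ h1 h2 => lt_asymm h1 h2),
    ← filter_or]
  congr 1
  refine filter_true_of_mem fun p hp => ?_
  simp only [mem_product] at hp
  exact lt_or_gt_of_ne fun e : p.2 = p.1 => disjoint_left.mp hab hp.1 (e ▸ hp.2)

lemma sgn_eq_neg_one_pow_mul_sgn_swap {a b : Finset (Fin n)} (hab : Disjoint a b) :
    sgn a b = (-1 : ℝ) ^ (#a * #b) * sgn b a := by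
  rw [← sgn_mul_sgn_swap hab, mul_assoc, sgn_mul_self, mul_one]

lemma lhook_add_left (v w α : MV n) : lhook (v + w) α = lhook v α + lhook w α := by
  funext b
  simp only [lhook, Pi.add_apply, mul_add, sum_add_distrib]

lemma lhook_smul_left (r : ℝ) (v α : MV n) : lhook (r • v) α = r • lhook v α := by
  funext b
  simp only [lhook, Pi.smul_apply, smul_eq_mul, mul_sum]
  exact sum_congr rfl fun _ _ => by ring

lemma lhook_add_right (v α β : MV n) : lhook v (α + β) = lhook v α + lhook v β := by
  funext b
  simp only [lhook, Pi.add_apply, mul_add, add_mul, sum_add_distrib]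

lemma lhook_smul_right (r : ℝ) (v α : MV n) : lhook v (r • α) = r • lhook v α := by
  funext b
  simp only [lhook, Pi.smul_apply, smul_eq_mul, mul_sum]
  exact sum_congr rfl fun _ _ => by ring

def lhookₗ : MV n →ₗ[ℝ] MV n →ₗ[ℝ] MV n :=
  LinearMap.mk₂ ℝ lhook lhook_add_left lhook_smul_left lhook_add_right lhook_smul_right

lemma lhook_sum_left {ι : Type*} (s : Finset ι) (v : ι → MV n) (α : MV n) :
    lhook (∑ i ∈ s, v i) α = ∑ i ∈ s, lhook (v i) α :=
  map_sum (lhookₗ.flip α) v s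

lemma lhook_sum_right {ι : Type*} (v : MV n) (s : Finset ι) (α : ι → MV n) :
    lhook v (∑ i ∈ s, α i) = ∑ i ∈ s, lhook v (α i) :=
  map_sum (lhookₗ v) α s

def lhookL : MV n →L[ℝ] MV n →L[ℝ] MV n :=
  LinearMap.toContinuousLinearMap (LinearMap.toContinuousLinearMap.toLinearMap ∘ₗ lhookₗ)

lemma lhookL_apply (v α : MV n) : lhookL v α = lhook v α := rfl

lemma lhook_lhook (v α β : MV n) : lhook (lhook v α) β = lhook v (wedge α β) := by
  funext c
  simp only [lhook, wedge, mul_sum, sum_mul]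
  rw [sum_sigma', sum_sigma']
  refine sum_bij' (fun p _ => ⟨p.2 ∪ p.1, p.2⟩) (fun p _ => ⟨p.1 \ p.2, p.2⟩) ?_ ?_ ?_ ?_ ?_ <;>
    simp only [mem_sigma, mem_powerset, subset_compl_iff_disjoint_right]
  · rintro ⟨b, a⟩ ⟨hbc, habc⟩
    exact ⟨disjoint_union_left.mpr ⟨(disjoint_union_right.mp habc).2, hbc⟩, subset_union_left⟩
  · rintro ⟨s, a⟩ ⟨hsc, has⟩
    exact ⟨hsc.mono_left sdiff_subset,
      disjoint_union_right.mpr ⟨disjoint_sdiff, hsc.mono_left has⟩⟩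
  · rintro ⟨b, a⟩ ⟨-, habc⟩
    simp [union_sdiff_cancel_left (disjoint_union_right.mp habc).1]
  · rintro ⟨s, a⟩ ⟨-, has⟩
    simp [union_sdiff_of_subset has]
  · rintro ⟨b, a⟩ ⟨hbc, habc⟩
    have hab := (disjoint_union_right.mp habc).1
    simp only [union_sdiff_cancel_left hab, sgn_union_right a hbc, sgn_union_left c hab,
      union_assoc]
    ring

lemma wedge_comm_of_isGrade {h k : ℕ} {α β : MV n} (hα : IsGrade h α) (hβ : IsGrade k β) :
    wedge α β = (-1 : ℝ) ^ (h * k) • wedge β α := by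
  funext s
  simp only [wedge, Pi.smul_apply, smul_eq_mul, mul_sum]
  refine sum_nbij' (s \ ·) (s \ ·) (by simp) (by simp)
    (fun a ha => Finset.sdiff_sdiff_eq_self (mem_powerset.mp ha))
    (fun a ha => Finset.sdiff_sdiff_eq_self (mem_powerset.mp ha)) (fun a has => ?_)
  rw [Finset.sdiff_sdiff_eq_self (mem_powerset.mp has)]
  by_cases ha : #a = h
  · by_cases hb : #(s \ a) = k
    · rw [sgn_eq_neg_one_pow_mul_sgn_swap disjoint_sdiff, ha, hb]
      ring
    · simp [hβ _ hb]
  · simp [hα _ ha]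

lemma lhook_lhook_comm {h k : ℕ} (v : MV n) {α β : MV n} (hα : IsGrade h α)
    (hβ : IsGrade k β) : lhook (lhook v α) β = (-1 : ℝ) ^ (h * k) • lhook (lhook v β) α := by
  rw [lhook_lhook, lhook_lhook, wedge_comm_of_isGrade hα hβ, lhook_smul_right]

lemma isGrade_dxS (t : Finset (Fin n)) : IsGrade #t (dxS t) :=
  fun s hs => if_neg fun e : s = t => hs (e ▸ rfl)

lemma lhook_lhook_dxS_comm {h : ℕ} (v : MV n) {α : MV n} (hα : IsGrade h α) (j : Fin n) :
    lhook (lhook v α) (dxS {j}) = (-1 : ℝ) ^ h • lhook (lhook v (dxS {j})) α := by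
  simpa using lhook_lhook_comm v hα (isGrade_dxS {j})

lemma isGrade_pd {h : ℕ} {ω : (Fin n → ℝ) → MV n} (hω : ∀ y, IsGrade h (ω y)) (j : Fin n)
    (x : Fin n → ℝ) : IsGrade h (pd ω j x) := by
  intro s hs
  by_cases hd : DifferentiableAt ℝ ω x
  · have hcoord := fderiv_apply hd s
    rw [show (fun y => ω y s) = 0 from funext fun y => hω y s hs, fderiv_zero] at hcoord
    exact (DFunLike.congr_fun hcoord (Pi.single j 1)).symm
  · simp [pd, fderiv_zero_of_not_differentiableAt hd]

lemma pd_lhook {v ω : (Fin n → ℝ) → MV n} {x : Fin n → ℝ} (hv : DifferentiableAt ℝ v x)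
    (hω : DifferentiableAt ℝ ω x) (j : Fin n) :
    pd (fun y => lhook (v y) (ω y)) j x = lhook (pd v j x) (ω x) + lhook (v x) (pd ω j x) := by
  simp only [pd, ← lhookL_apply, lhookL.fderiv_of_bilinear hv hω, add_apply,
    ContinuousLinearMap.precompR_apply, ContinuousLinearMap.precompL_apply]
  exact add_comm _ _

end MV

open MV

theorem stmt10_general {n h : ℕ} (Ω : Set (Fin n → ℝ)) (hΩ : IsOpen Ω)
    (v ω : (Fin n → ℝ) → MV n)
    (hv : ContDiffOn ℝ 1 v Ω) (hω : ContDiffOn ℝ 1 ω Ω)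
    (hgω : ∀ x, IsGrade h (ω x)) :
    ∀ x ∈ Ω, dvg (fun y => lhook (v y) (ω y)) x =
      (-1 : ℝ) ^ h • (lhook (dvg v x) (ω x) + lhook (v x) (extd ω x)) := by
  intro x hx
  have hvx : DifferentiableAt ℝ v x :=
    (hv.differentiableOn one_ne_zero).differentiableAt (hΩ.mem_nhds hx)
  have hωx : DifferentiableAt ℝ ω x :=
    (hω.differentiableOn one_ne_zero).differentiableAt (hΩ.mem_nhds hx)
  calc dvg (fun y => lhook (v y) (ω y)) x
      = ∑ j, lhook (lhook (pd v j x) (ω x)) (dxS {j})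
          + ∑ j, lhook (lhook (v x) (pd ω j x)) (dxS {j}) := by
        simp only [dvg, pd_lhook hvx hωx, lhook_add_left, Finset.sum_add_distrib]
    _ = (-1 : ℝ) ^ h • ∑ j, lhook (lhook (pd v j x) (dxS {j})) (ω x)
          + (-1 : ℝ) ^ h • ∑ j, lhook (v x) (wedge (dxS {j}) (pd ω j x)) := by
        simp only [lhook_lhook_dxS_comm _ (hgω x), lhook_lhook_dxS_comm _ (isGrade_pd hgω _ x),
          lhook_lhook, Finset.smul_sum]
    _ = _ := by rw [dvg, extd, lhook_sum_left, lhook_sum_right, smul_add]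

theorem stmt10 {n k h : ℕ} (hhk : h ≤ k) (Ω : Set (Fin n → ℝ)) (hΩ : IsOpen Ω)
    (v ω : (Fin n → ℝ) → MV n)
    (hv : ContDiffOn ℝ 1 v Ω) (hω : ContDiffOn ℝ 1 ω Ω)
    (hgv : ∀ x, IsGrade k (v x)) (hgω : ∀ x, IsGrade h (ω x)) :
    ∀ x ∈ Ω, dvg (fun y => lhook (v y) (ω y)) x =
      (-1 : ℝ) ^ h • (lhook (dvg v x) (ω x) + lhook (v x) (extd ω x)) :=
  stmt10_general Ω hΩ v ω hv hω hgω
end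
end
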